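/- There exists no grade adjoint operation on the N=1 super Schrödinger algebra s(1/1): there is no conjugate-linear, parity-preserving bijection σ of s(1/1) that reverses products (σ of a bracket of homogeneous elements x, y equals (−1)^{|x||y|} times the bracket of σ(y) and σ(x)) and satisfies σ²(x) = (−1)^{|x|} x for homogeneous x. In particular, any such σ would restrict to the odd part span{Q, S, X} as a map whose matrix A in the basis (Q, S, X) satisfies Ā A = −1₃, which is impossible since it would imply |det A|² = −1. -/

import Mathlib

/-! The N=1 super Schrödinger algebra 𝔰(1/1) realized concretely on `Fin 9 → ℂ` with
basis `e 0 = H, e 1 = P, e 2 = G, e 3 = D, e 4 = K, e 5 = M, e 6 = Q, e 7 = S, e 8 = X`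
(indices `0–5` even, `6–8` odd).  The super bracket `bkt` is the bilinear extension of
the structure constants: the nonvanishing relations are
`[H,D]=2H, [H,K]=D, [D,K]=2K, [P,G]=M, [H,G]=P, [D,G]=G, [P,D]=P, [P,K]=G,
{Q,Q}=-2H, {S,S}=-2K, {X,X}=-M, {Q,X}=-P, {S,X}=-G, {Q,S}=-D,
[Q,D]=Q, [Q,K]=S, [D,S]=S, [H,S]=Q, [Q,G]=X, [P,S]=X`. -/

noncomputable section

abbrev S11 : Type := Fin 9 → ℂ

def e (i : Fin 9) : S11 := Pi.single i 1

/-- Structure constants of 𝔰(1/1): `c i j = ⁅e i, e j⁆` (anticommutator when both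
arguments are odd, commutator otherwise). -/
def c (i j : Fin 9) : S11 :=
  match i.val, j.val with
  -- even-even
  | 0, 3 => (2 : ℂ) • e 0
  | 3, 0 => -((2 : ℂ) • e 0)
  | 0, 4 => e 3
  | 4, 0 => -(e 3)
  | 3, 4 => (2 : ℂ) • e 4
  | 4, 3 => -((2 : ℂ) • e 4)
  | 1, 2 => e 5
  | 2, 1 => -(e 5)
  | 0, 2 => e 1
  | 2, 0 => -(e 1)
  | 3, 2 => -(e 2)
  | 2, 3 => e 2
  | 1, 3 => e 1
  | 3, 1 => -(e 1)
  | 1, 4 => e 2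
  | 4, 1 => -(e 2)
  -- even-odd
  | 6, 3 => e 6
  | 3, 6 => -(e 6)
  | 6, 4 => e 7
  | 4, 6 => -(e 7)
  | 3, 7 => e 7
  | 7, 3 => -(e 7)
  | 0, 7 => e 6
  | 7, 0 => -(e 6)
  | 6, 2 => e 8
  | 2, 6 => -(e 8)
  | 1, 7 => e 8
  | 7, 1 => -(e 8)
  -- odd-odd (symmetric)
  | 6, 6 => -((2 : ℂ) • e 0)
  | 7, 7 => -((2 : ℂ) • e 4)
  | 8, 8 => -(e 5)
  | 6, 8 => -(e 1)
  | 8, 6 => -(e 1)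
  | 7, 8 => -(e 2)
  | 8, 7 => -(e 2)
  | 6, 7 => -(e 3)
  | 7, 6 => -(e 3)
  | _, _ => 0

/-- The super bracket of 𝔰(1/1), the bilinear extension of the structure constants. -/
def bkt (x y : S11) : S11 := ∑ i : Fin 9, ∑ j : Fin 9, (x i * y j) • c i j

/-- `x` is even iff it is supported on the even basis elements `H,P,G,D,K,M`. -/
def IsEven (x : S11) : Prop := ∀ i : Fin 9, 6 ≤ i.val → x i = 0

/-- `x` is odd iff it is supported on the odd basis elements `Q,S,X`. -/
def IsOdd (x : S11) : Prop := ∀ i : Fin 9, i.val < 6 → x i = 0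

/-! A grade adjoint restricts to a conjugate-linear map `σ` of the three-dimensional odd part
with `σ ∘ σ = -1`. In a basis `σ` is `A ∘ conj`, so `σ ∘ σ = -1` reads `A * Ā = -1`; taking
determinants gives `|det A|² = (-1)³`, which is absurd. The same determinant argument settles
the matrix clause directly. -/

namespace Matrix

variable {n 𝕜 : Type*} [Fintype n] [DecidableEq n] [RCLike 𝕜]

theorem map_conj_mul_self_ne_neg_one (hn : Odd (Fintype.card n)) (A : Matrix n n 𝕜) :
    A.map (starRingEnd 𝕜) * A ≠ -1 := by
  intro h
  have hdet := congrArg det h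
  rw [det_mul, ← RingHom.mapMatrix_apply, ← RingHom.map_det, RCLike.conj_mul, det_neg, det_one,
    hn.neg_one_pow, mul_one] at hdet
  have : (‖A.det‖ ^ 2 : ℝ) = -1 := by exact_mod_cast hdet
  nlinarith [sq_nonneg ‖A.det‖]

end Matrix

theorem Module.Basis.not_forall_semilinear_sq_eq_neg {ι 𝕜 V : Type*} [Fintype ι] [DecidableEq ι]
    [RCLike 𝕜] [AddCommGroup V] [Module 𝕜 V] (b : Basis ι 𝕜 V)
    (hι : Odd (Fintype.card ι)) (σ : V →ₗ⋆[𝕜] V) : ¬ ∀ x, σ (σ x) = -x := by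
  intro hσ
  let A : Matrix ι ι 𝕜 := fun i j => b.repr (σ (b j)) i
  have hA : A * A.map (starRingEnd 𝕜) = -1 := by
    ext k j
    have hσb : σ (b j) = ∑ i, A i j • b i := (b.sum_repr _).symm
    have hrepr := congrArg (fun x => b.repr x k) (hσ (b j))
    simp only [hσb, map_sum, map_smulₛₗ, map_neg, b.repr_self] at hrepr
    simp only [Matrix.mul_apply, Matrix.map_apply, Matrix.neg_apply, Matrix.one_apply]
    simpa [A, Finsupp.single_apply, eq_comm, mul_comm] using hrepr
  refine Matrix.map_conj_mul_self_ne_neg_one hι (A.map (starRingEnd 𝕜)) ?_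
  have hAA : (A.map (starRingEnd 𝕜)).map (starRingEnd 𝕜) = A := by ext; simp
  rwa [hAA]

def oddIndex (i : Fin 3) : Fin 9 := ⟨i.val + 6, by omega⟩

theorem oddIndex_injective : Function.Injective oddIndex := by decide

theorem linearIndependent_e_oddIndex : LinearIndependent ℂ (e ∘ oddIndex) := by
  simpa [Function.comp_def, e] using
    (Pi.basisFun ℂ (Fin 9)).linearIndependent.comp _ oddIndex_injective

abbrev oddPart : Submodule ℂ S11 := Submodule.span ℂ (Set.range (e ∘ oddIndex))

theorem isOdd_iff_mem_oddPart (x : S11) : IsOdd x ↔ x ∈ oddPart := by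
  rw [Submodule.mem_span_range_iff_exists_fun]
  constructor
  · intro hx
    refine ⟨fun i => x (oddIndex i), funext fun j => ?_⟩
    fin_cases j <;> simp [Fin.sum_univ_three, oddIndex, e, Pi.single_apply] <;>
      exact (hx _ (by decide)).symm
  · rintro ⟨a, rfl⟩ j hj
    rw [Finset.sum_apply]
    refine Finset.sum_eq_zero fun i _ => ?_
    have hji : j ≠ oddIndex i := by rintro rfl; simp [oddIndex] at hj
    simp [e, hji]

/-- There is no grade adjoint operation on 𝔰(1/1): no
conjugate-linear, parity-preserving bijection `σ` reversing the super bracket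
(`σ⁅x,y⁆ = (-1)^{|x||y|} ⁅σ y, σ x⁆` for homogeneous `x, y`) with
`σ²(x) = (-1)^{|x|} x`.  In particular no matrix `A` over ℂ (as would arise by
restricting such a `σ` to the odd part `span{Q,S,X}`) satisfies `Ā A = -1₃`, since this
would imply `|det A|² = -1`. -/
theorem statement10 :
    (¬ ∃ σ : S11 → S11,
      Function.Bijective σ ∧
      (∀ x y : S11, σ (x + y) = σ x + σ y) ∧
      (∀ (a : ℂ) (x : S11), σ (a • x) = (starRingEnd ℂ) a • σ x) ∧
      (∀ x : S11, IsEven x → IsEven (σ x)) ∧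
      (∀ x : S11, IsOdd x → IsOdd (σ x)) ∧
      (∀ x y : S11, IsEven x → IsEven y → σ (bkt x y) = bkt (σ y) (σ x)) ∧
      (∀ x y : S11, IsEven x → IsOdd y → σ (bkt x y) = bkt (σ y) (σ x)) ∧
      (∀ x y : S11, IsOdd x → IsEven y → σ (bkt x y) = bkt (σ y) (σ x)) ∧
      (∀ x y : S11, IsOdd x → IsOdd y → σ (bkt x y) = -bkt (σ y) (σ x)) ∧
      (∀ x : S11, IsEven x → σ (σ x) = x) ∧
      (∀ x : S11, IsOdd x → σ (σ x) = -x)) ∧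
    (∀ A : Matrix (Fin 3) (Fin 3) ℂ, A.map (starRingEnd ℂ) * A ≠ -1) := by
  refine ⟨?_, Matrix.map_conj_mul_self_ne_neg_one (by decide)⟩
  rintro ⟨σ, -, hadd, hsmul, -, hodd, -, -, -, -, -, hsq⟩
  let σₗ : S11 →ₗ⋆[ℂ] S11 := { toFun := σ, map_add' := hadd, map_smul' := hsmul }
  have hσ : ∀ x ∈ oddPart, σₗ x ∈ oddPart := fun x hx =>
    (isOdd_iff_mem_oddPart _).1 (hodd x ((isOdd_iff_mem_oddPart x).2 hx))
  refine (Module.Basis.span linearIndependent_e_oddIndex).not_forall_semilinear_sq_eq_neg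
    (by decide) (σₗ.restrict hσ) fun x => Subtype.ext ?_
  exact hsq x ((isOdd_iff_mem_oddPart x).2 x.2)

end
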